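/- Let a, b ∈ ℝ with b ≥ 2 and b < 2a. Then every root z ∈ ℂ, z ≠ 0, of the Kummer function Φ(a, b, ·) satisfies Re(z) < 0. -/

import Mathlib

open Complex

/-- The Kummer confluent hypergeometric function `Φ(a, b, z)`. -/
noncomputable def kummerPhi (a b z : ℂ) : ℂ :=
  ∑' k : ℕ, ((ascPochhammer ℂ k).eval a / (ascPochhammer ℂ k).eval b) * z ^ k /
    (Nat.factorial k)

/-!
Put `u t = Φ(a, b, z t)` for real `t`. Differentiating the power series termwise shows that `u`
solves the Kummer equation `t u'' + b u' = z (t u' + a u)`, that is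
`(t^b u')' = z t^b u' + a z t^(b-1) u`. If `Φ(a, b, z) = 0` then `u 1 = 0`, while the weight `t^b`
kills the boundary terms at `0`. Multiplying the equation by `conj u` and integrating over `[0, 1]`
gives `z I + a z T + S = 0` with `I = ∫ t^b u' conj u`, `T = ∫ t^(b-1) |u|²`, `S = ∫ t^b |u'|²`,
and integrating `(t^b |u|²)'` gives `b T + 2 Re I = 0`. Multiplying the first identity by `conj z`
and taking real parts, `|z|² (a - b/2) T + Re z · S = 0`; since `T > 0` (as `u 0 = 1`), `S ≥ 0`
and `b < 2a`, this forces `Re z < 0`.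
-/

open FormalMultilinearSeries
open scoped NNReal Nat ComplexConjugate

lemma HasDerivAt.comp_const_mul_ofReal {F : ℂ → ℂ} {F' w : ℂ} {t : ℝ}
    (hF : HasDerivAt F F' (w * t)) : HasDerivAt (fun s : ℝ => F (w * s)) (w * F') t := by
  simpa [mul_comm] using (hF.comp (t : ℂ) ((hasDerivAt_id (t : ℂ)).const_mul w)).comp_ofReal

section PowerSeries

variable {c : ℕ → ℂ}

noncomputable def derivCoeffs (c : ℕ → ℂ) (n : ℕ) : ℂ := (n + 1) * c (n + 1)

lemma norm_natCast_add_one (n : ℕ) : ‖(n : ℂ) + 1‖ = n + 1 := by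
  exact_mod_cast norm_natCast (n + 1)

lemma summable_norm_mul_pow_of_radius_eq_top (hc : (ofScalars ℂ c).radius = ⊤) (r : ℝ≥0) :
    Summable fun n => ‖c n‖ * (r : ℝ) ^ n := by
  simpa using (radius_eq_top_iff_summable_norm _).1 hc r

lemma hasSum_ofScalarsSum (hc : (ofScalars ℂ c).radius = ⊤) (w : ℂ) :
    HasSum (fun n => c n * w ^ n) (ofScalarsSum c w) := by
  rw [ofScalars_sum_eq]
  simp_rw [smul_eq_mul]
  refine (Summable.of_norm ?_).hasSum
  simpa [norm_pow] using summable_norm_mul_pow_of_radius_eq_top hc ‖w‖₊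

lemma succ_mul_pow_le {r : ℝ} (hr : 0 ≤ r) (n : ℕ) :
    (n + 1) * r ^ n ≤ (2 * (r + 1)) ^ (n + 1) :=
  calc (n + 1) * r ^ n ≤ 2 ^ n * (r + 1) ^ n := by
        gcongr
        · exact_mod_cast Nat.lt_two_pow_self
        · linarith
    _ = (2 * (r + 1)) ^ n := (mul_pow _ _ _).symm
    _ ≤ (2 * (r + 1)) ^ (n + 1) := pow_le_pow_right₀ (by linarith) n.le_succ

lemma radius_ofScalars_derivCoeffs (hc : (ofScalars ℂ c).radius = ⊤) :
    (ofScalars ℂ (derivCoeffs c)).radius = ⊤ := by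
  refine (radius_eq_top_iff_summable_norm _).2 fun r => ?_
  simp only [ofScalars_norm]
  refine ((summable_nat_add_iff 1).2 (summable_norm_mul_pow_of_radius_eq_top hc
    (2 * (r + 1)))).of_nonneg_of_le (fun n => by positivity) fun n => ?_
  have h := succ_mul_pow_le r.2 n
  rw [derivCoeffs, norm_mul, norm_natCast_add_one, mul_right_comm, mul_comm]
  push_cast
  gcongr
  exact h

theorem hasDerivAt_ofScalarsSum (hc : (ofScalars ℂ c).radius = ⊤) (w : ℂ) :
    HasDerivAt (ofScalarsSum c) (ofScalarsSum (derivCoeffs c) w) w := by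
  set R : ℝ≥0 := ‖w‖₊ + 1
  have hbound : Summable fun n => ‖c n‖ * (n * (R : ℝ) ^ (n - 1)) := by
    refine (summable_nat_add_iff 1).1 ?_
    simpa [derivCoeffs, norm_mul, norm_natCast_add_one, mul_comm, mul_left_comm, mul_assoc] using
      summable_norm_mul_pow_of_radius_eq_top (radius_ofScalars_derivCoeffs hc) R
  have hR : w ∈ Metric.ball (0 : ℂ) R := by simp [R]
  have h := hasDerivAt_tsum_of_isPreconnected hbound Metric.isOpen_ball
    (convex_ball (0 : ℂ) R).isPreconnected (g := fun n y => c n * y ^ n)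
    (g' := fun n y => c n * (n * y ^ (n - 1)))
    (fun n y _ => (hasDerivAt_pow n y).const_mul (c n))
    (fun n y hy => ?_) (Metric.mem_ball_self (by positivity))
    (hasSum_ofScalarsSum hc 0).summable hR
  · have hF : ofScalarsSum c = fun y => ∑' n, c n * y ^ n :=
      funext fun y => (hasSum_ofScalarsSum hc y).tsum_eq.symm
    have hF' : HasSum (fun n => c n * (n * w ^ (n - 1))) (ofScalarsSum (derivCoeffs c) w) := by
      refine (hasSum_nat_add_iff' 1).1 ?_
      simpa [derivCoeffs, mul_comm, mul_left_comm, mul_assoc] using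
        hasSum_ofScalarsSum (radius_ofScalars_derivCoeffs hc) w
    rwa [hF, ← hF'.tsum_eq]
  · rw [mem_ball_zero_iff] at hy
    rw [norm_mul, norm_mul, norm_pow]
    gcongr
    simp

lemma hasSum_mul_ofScalarsSum_derivCoeffs (hc : (ofScalars ℂ c).radius = ⊤) (w : ℂ) :
    HasSum (fun n => n * c n * w ^ n) (w * ofScalarsSum (derivCoeffs c) w) := by
  refine (hasSum_nat_add_iff' 1).1 ?_
  simpa [derivCoeffs, pow_succ, mul_comm, mul_left_comm, mul_assoc] using
    (hasSum_ofScalarsSum (radius_ofScalars_derivCoeffs hc) w).mul_left w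

end PowerSeries

section Kummer

noncomputable def kummerCoeff (a b : ℂ) (n : ℕ) : ℂ :=
  (ascPochhammer ℂ n).eval a / ((ascPochhammer ℂ n).eval b * n !)

lemma kummerPhi_eq_ofScalarsSum (a b : ℂ) : kummerPhi a b = ofScalarsSum (kummerCoeff a b) := by
  ext w
  rw [kummerPhi, ofScalars_sum_eq]
  refine tsum_congr fun n => ?_
  rw [kummerCoeff, smul_eq_mul]
  ring

lemma kummerCoeff_zero (a b : ℂ) : kummerCoeff a b 0 = 1 := by simp [kummerCoeff]

variable (a : ℂ) {b : ℂ}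

lemma kummerCoeff_eq_Gamma_smul (hb : ∀ n : ℕ, b ≠ -n) :
    kummerCoeff a b = Gamma b • regularizedHGFunCoeff {a} {b} := by
  ext n
  have hΓ : Gamma b ≠ 0 := Gamma_ne_zero hb
  have hpoch := Gamma_add_nat_div_Gamma_eq (n := n) b hb
  simp only [kummerCoeff, regularizedHGFunCoeff, Pi.smul_apply, smul_eq_mul,
    Multiset.map_singleton, Multiset.prod_singleton, ← hpoch]
  field_simp

lemma radius_ofScalars_kummerCoeff (hb : ∀ n : ℕ, b ≠ -n) :
    (ofScalars ℂ (kummerCoeff a b)).radius = ⊤ := by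
  rw [kummerCoeff_eq_Gamma_smul a hb, ofScalars_smul, ← top_le_iff]
  exact (radius_regularizedHGFunSeries_eq_top (by simp)).ge.trans radius_le_smul

lemma kummerCoeff_succ (hb : ∀ n : ℕ, b ≠ -n) (n : ℕ) :
    (n + 1) * (b + n) * kummerCoeff a b (n + 1) = (a + n) * kummerCoeff a b n := by
  have hpoch : (ascPochhammer ℂ n).eval b ≠ 0 := by
    simpa [ascPochhammer_eval_eq_zero_iff] using fun k _ h => hb k (by rw [h, neg_neg])
  have hbn : b + n ≠ 0 := fun h => hb n (eq_neg_of_add_eq_zero_left h)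
  simp only [kummerCoeff, ascPochhammer_succ_eval, Nat.factorial_succ]
  push_cast
  field_simp

theorem kummer_differential_equation (hb : ∀ n : ℕ, b ≠ -n) (w : ℂ) :
    w * ofScalarsSum (derivCoeffs (derivCoeffs (kummerCoeff a b))) w
      + b * ofScalarsSum (derivCoeffs (kummerCoeff a b)) w
      = w * ofScalarsSum (derivCoeffs (kummerCoeff a b)) w
        + a * ofScalarsSum (kummerCoeff a b) w := by
  have hc := radius_ofScalars_kummerCoeff a hb
  have hc' := radius_ofScalars_derivCoeffs hc
  have h := ((hasSum_mul_ofScalarsSum_derivCoeffs hc' w).add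
    ((hasSum_ofScalarsSum hc' w).mul_left b)).sub
      ((hasSum_mul_ofScalarsSum_derivCoeffs hc w).add ((hasSum_ofScalarsSum hc w).mul_left a))
  refine sub_eq_zero.1 (h.unique ?_)
  convert hasSum_zero with n
  simp only [derivCoeffs]
  linear_combination w ^ n * kummerCoeff_succ a hb n

end Kummer

section Energy

variable {a b : ℝ} {z : ℂ} {u v w : ℝ → ℂ}

lemma rpow_sub_one_mul_self {t : ℝ} (ht : 0 ≤ t) (hb : b ≠ 0) : t ^ (b - 1) * t = t ^ b := by
  rw [← Real.rpow_add_one' ht (by simpa using hb), sub_add_cancel]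

theorem radial_kummer_energy_identity (hb : 1 ≤ b) (hu : ∀ t, HasDerivAt u (v t) t)
    (hv : ∀ t, HasDerivAt v (w t) t)
    (hode : ∀ t : ℝ, t * w t + b * v t = z * (t * v t + a * u t)) (h1 : u 1 = 0) :
    z * (∫ t in (0 : ℝ)..1, (t ^ b : ℝ) * (v t * conj (u t)))
      + a * z * (∫ t in (0 : ℝ)..1, t ^ (b - 1) * ‖u t‖ ^ 2 : ℝ)
      + (∫ t in (0 : ℝ)..1, t ^ b * ‖v t‖ ^ 2 : ℝ) = 0 := by
  have hcu : Continuous u := continuous_iff_continuousAt.2 fun t => (hu t).continuousAt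
  have hcv : Continuous v := continuous_iff_continuousAt.2 fun t => (hv t).continuousAt
  have hp : Continuous fun t : ℝ => t ^ b := Real.continuous_rpow_const (by linarith)
  have hp' : Continuous fun t : ℝ => t ^ (b - 1) := Real.continuous_rpow_const (by linarith)
  have hi {f : ℝ → ℂ} (hf : Continuous f) : IntervalIntegrable f MeasureTheory.volume 0 1 :=
    hf.intervalIntegrable 0 1
  have hderiv : ∀ t ∈ Set.uIcc (0 : ℝ) 1,
      HasDerivAt (fun t : ℝ => ((t ^ b : ℝ) : ℂ) * (v t * conj (u t)))
        (z * ((t ^ b : ℝ) * (v t * conj (u t))) + a * z * (t ^ (b - 1) * ‖u t‖ ^ 2 : ℝ)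
          + (t ^ b * ‖v t‖ ^ 2 : ℝ)) t := by
    intro t ht
    have ht0 : 0 ≤ t := by simp_all
    have hsplit : ((t ^ b : ℝ) : ℂ) = (t ^ (b - 1) : ℝ) * t := by
      rw [← ofReal_mul, rpow_sub_one_mul_self ht0 (by linarith)]
    refine (((Real.hasDerivAt_rpow_const (Or.inr hb)).ofReal_comp).fun_mul
      ((hv t).fun_mul (hu t).star)).congr_deriv ?_
    simp only [ofReal_mul, ofReal_pow, ← mul_conj', Complex.star_def]
    linear_combination (((t ^ (b - 1) : ℝ) : ℂ) * conj (u t)) * hode t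
      + (w t * conj (u t) - z * v t * conj (u t)) * hsplit
  have hint := intervalIntegral.integral_eq_sub_of_hasDerivAt hderiv (hi (by fun_prop))
  rw [intervalIntegral.integral_add (hi (by fun_prop)) (hi (by fun_prop)),
    intervalIntegral.integral_add (hi (by fun_prop)) (hi (by fun_prop)),
    intervalIntegral.integral_const_mul, intervalIntegral.integral_const_mul,
    intervalIntegral.integral_ofReal, intervalIntegral.integral_ofReal] at hint
  simpa [h1, Real.zero_rpow (by linarith : b ≠ 0)] using hint

theorem weighted_norm_sq_identity (hb : 1 ≤ b) (hu : ∀ t, HasDerivAt u (v t) t)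
    (hv : Continuous v) (h1 : u 1 = 0) :
    b * (∫ t in (0 : ℝ)..1, t ^ (b - 1) * ‖u t‖ ^ 2)
      + 2 * (∫ t in (0 : ℝ)..1, (t ^ b : ℝ) * (v t * conj (u t))).re = 0 := by
  have hcu : Continuous u := continuous_iff_continuousAt.2 fun t => (hu t).continuousAt
  have hp : Continuous fun t : ℝ => t ^ b := Real.continuous_rpow_const (by linarith)
  have hp' : Continuous fun t : ℝ => t ^ (b - 1) := Real.continuous_rpow_const (by linarith)
  have hi {f : ℝ → ℝ} (hf : Continuous f) : IntervalIntegrable f MeasureTheory.volume 0 1 :=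
    hf.intervalIntegrable 0 1
  have hderiv : ∀ t ∈ Set.uIcc (0 : ℝ) 1, HasDerivAt (fun t => t ^ b * ‖u t‖ ^ 2)
      (b * (t ^ (b - 1) * ‖u t‖ ^ 2) + 2 * (((t ^ b : ℝ) : ℂ) * (v t * conj (u t))).re) t := by
    intro t _
    refine ((Real.hasDerivAt_rpow_const (Or.inr hb)).fun_mul (hu t).norm_sq).congr_deriv ?_
    rw [Complex.inner, re_ofReal_mul]
    ring
  have hint := intervalIntegral.integral_eq_sub_of_hasDerivAt hderiv (hi (by fun_prop))
  have hre := intervalIntegral.intervalIntegral_re (μ := MeasureTheory.volume)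
    (f := fun t => ((t ^ b : ℝ) : ℂ) * (v t * conj (u t)))
    ((by fun_prop : Continuous _).intervalIntegrable 0 1)
  rw [intervalIntegral.integral_add (hi (by fun_prop)) (hi (by fun_prop)),
    intervalIntegral.integral_const_mul, intervalIntegral.integral_const_mul] at hint
  simp only [RCLike.re_to_complex] at hre
  rw [hre] at hint
  simpa [h1, Real.zero_rpow (by linarith : b ≠ 0)] using hint

lemma integral_rpow_mul_norm_sq_pos (hb : 1 ≤ b) (hu : Continuous u) (h0 : u 0 ≠ 0) :
    0 < ∫ t in (0 : ℝ)..1, t ^ (b - 1) * ‖u t‖ ^ 2 := by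
  obtain ⟨c, hc, hc0⟩ : ∃ c ∈ Set.Ioc (0 : ℝ) 1, u c ≠ 0 :=
    ((hu.continuousAt.eventually_ne h0).filter_mono nhdsWithin_le_nhds).and
      (Ioc_mem_nhdsGT one_pos) |>.exists.imp fun c h => ⟨h.2, h.1⟩
  refine intervalIntegral.integral_pos one_pos
    ((Real.continuous_rpow_const (by linarith)).mul (by fun_prop)).continuousOn
    (fun t ht => by have := ht.1.le; positivity) ⟨c, Set.Ioc_subset_Icc_self hc, ?_⟩
  have := hc.1
  positivity

theorem re_lt_zero_of_radial_kummer_ode (hb : 1 ≤ b) (hab : b < 2 * a) (hz : z ≠ 0)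
    (hu : ∀ t, HasDerivAt u (v t) t) (hv : ∀ t, HasDerivAt v (w t) t)
    (hode : ∀ t : ℝ, t * w t + b * v t = z * (t * v t + a * u t))
    (h0 : u 0 ≠ 0) (h1 : u 1 = 0) : z.re < 0 := by
  have hcu : Continuous u := continuous_iff_continuousAt.2 fun t => (hu t).continuousAt
  have hcv : Continuous v := continuous_iff_continuousAt.2 fun t => (hv t).continuousAt
  have henergy := radial_kummer_energy_identity hb hu hv hode h1
  have hnorm := weighted_norm_sq_identity hb hu hcv h1
  have hT := integral_rpow_mul_norm_sq_pos hb hcu h0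
  set I := ∫ t in (0 : ℝ)..1, ((t ^ b : ℝ) : ℂ) * (v t * conj (u t))
  set T := ∫ t in (0 : ℝ)..1, t ^ (b - 1) * ‖u t‖ ^ 2
  set S := ∫ t in (0 : ℝ)..1, t ^ b * ‖v t‖ ^ 2
  have hS : 0 ≤ S := intervalIntegral.integral_nonneg zero_le_one fun t ht => by
    have := ht.1
    positivity
  have hnormSq : 0 < normSq z := normSq_pos.2 hz
  have hre : normSq z * (I.re + a * T) + z.re * S = 0 := by
    have h : (normSq z : ℂ) * (I + a * T) + conj z * S = 0 := by
      rw [normSq_eq_conj_mul_self]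
      linear_combination conj z * henergy
    simpa using congrArg re h
  by_contra! hre_nonneg
  nlinarith [mul_nonneg hre_nonneg hS, mul_pos hnormSq hT]

end Energy

theorem kummer_roots_left (a b : ℝ) (hb : 2 ≤ b) (hab : b < 2 * a) (z : ℂ) (hz : z ≠ 0)
    (h : kummerPhi a b z = 0) : z.re < 0 := by
  have hb' : ∀ n : ℕ, (b : ℂ) ≠ -n := fun n hn => by
    have := congrArg re hn
    simp only [ofReal_re, neg_re, natCast_re] at this
    linarith [n.cast_nonneg (α := ℝ)]
  set c := kummerCoeff a b
  have hc := radius_ofScalars_kummerCoeff (a : ℂ) hb'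
  have hc' := radius_ofScalars_derivCoeffs hc
  rw [kummerPhi_eq_ofScalarsSum] at h
  refine re_lt_zero_of_radial_kummer_ode (by linarith) hab hz
    (u := fun t => ofScalarsSum c (z * t))
    (v := fun t => z * ofScalarsSum (derivCoeffs c) (z * t))
    (w := fun t => z * (z * ofScalarsSum (derivCoeffs (derivCoeffs c)) (z * t)))
    (fun t => (hasDerivAt_ofScalarsSum hc _).comp_const_mul_ofReal)
    (fun t => ((hasDerivAt_ofScalarsSum hc' _).comp_const_mul_ofReal).const_mul z)
    (fun t => by linear_combination z * kummer_differential_equation (a : ℂ) hb' (z * t))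
    (by simp [c, kummerCoeff_zero]) (by simpa using h)
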